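/- Let A, B be bounded self-adjoint operators with spectra in an interval J and f operator convex on J. Then f((A+B)/2) ≤ ∫_0^1 f(tA+(1-t)B) dt ≤ (f(A)+f(B))/2 in the Loewner order. -/

import Mathlib

/-!
Operator convexity of `f` on `J` says that `X ↦ f(X)` is a convex map, with values in the
Loewner-ordered space of operators, on the set of self-adjoint operators with spectrum in `J`.
That set is convex: two spectra in `J` lie in a common `[m, M] ⊆ J`, and `spectrum X ⊆ [m, M]`
is the order-convex condition `m ≤ X ≤ M`. The Hermite–Hadamard inequality then holds for any
convex map into an ordered Banach space with closed positive cone, by integrating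
`f(tA + (1-t)B) ≤ t f(A) + (1-t) f(B)` and the midpoint inequality
`f((A+B)/2) ≤ (f(tA + (1-t)B) + f((1-t)A + tB))/2` over `t ∈ [0, 1]`.
-/

open MeasureTheory Set

theorem intervalIntegral.integral_smul_add_one_sub_smul {E : Type*} [NormedAddCommGroup E]
    [NormedSpace ℝ E] [CompleteSpace E] (x y : E) :
    ∫ t in (0 : ℝ)..1, (t • x + (1 - t) • y) = (1 / 2 : ℝ) • (x + y) := by
  have hx : IntervalIntegrable (fun t : ℝ ↦ t • x) volume 0 1 :=
    (continuous_id.smul continuous_const).intervalIntegrable 0 1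
  have hy : IntervalIntegrable (fun t : ℝ ↦ (1 - t) • y) volume 0 1 :=
    ((continuous_const.sub continuous_id).smul continuous_const).intervalIntegrable 0 1
  rw [intervalIntegral.integral_add hx hy, intervalIntegral.integral_smul_const,
    intervalIntegral.integral_smul_const]
  norm_num [integral_id, smul_add, intervalIntegral.integral_comp_sub_left (fun t : ℝ ↦ t)]

section HermiteHadamard

variable {E : Type*} [NormedAddCommGroup E] [NormedSpace ℝ E] [PartialOrder E]
  [IsOrderedAddMonoid E] [IsOrderedModule ℝ E] [ClosedIciTopology E]

theorem intervalIntegral.integral_mono_on' {a b : ℝ} (hab : a ≤ b) {f g : ℝ → E}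
    (hf : IntervalIntegrable f volume a b) (hg : IntervalIntegrable g volume a b)
    (h : ∀ x ∈ Icc a b, f x ≤ g x) : ∫ x in a..b, f x ≤ ∫ x in a..b, g x := by
  simpa only [intervalIntegral.integral_of_le hab] using
    setIntegral_mono_on hf.1 hg.1 measurableSet_Ioc fun x hx ↦ h x (Ioc_subset_Icc_self hx)

variable [CompleteSpace E]

variable {V : Type*} [AddCommGroup V] [Module ℝ V] {s : Set V} {φ : V → E} {a b : V}

theorem ConvexOn.map_midpoint_le_intervalIntegral (hφ : ConvexOn ℝ s φ) (ha : a ∈ s) (hb : b ∈ s)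
    (hint : IntervalIntegrable (fun t : ℝ ↦ φ (t • a + (1 - t) • b)) volume 0 1) :
    φ ((1 / 2 : ℝ) • (a + b)) ≤ ∫ t in (0 : ℝ)..1, φ (t • a + (1 - t) • b) := by
  set g : ℝ → E := fun t ↦ φ (t • a + (1 - t) • b)
  have hmem : ∀ u ∈ Icc (0 : ℝ) 1, u • a + (1 - u) • b ∈ s := fun u hu ↦
    hφ.1 ha hb hu.1 (sub_nonneg.2 hu.2) (add_sub_cancel _ _)
  have hint' : IntervalIntegrable (fun t ↦ g (1 - t)) volume 0 1 := by
    simpa using (hint.comp_sub_left 1).symm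
  have hsym : ∀ t ∈ Icc (0 : ℝ) 1, φ ((1 / 2 : ℝ) • (a + b)) ≤
      (1 / 2 : ℝ) • g t + (1 / 2 : ℝ) • g (1 - t) := by
    rintro t ⟨ht₀, ht₁⟩
    convert hφ.2 (hmem t ⟨ht₀, ht₁⟩) (hmem (1 - t) ⟨sub_nonneg.2 ht₁, by linarith⟩)
      (by norm_num : (0 : ℝ) ≤ 1 / 2) (by norm_num : (0 : ℝ) ≤ 1 / 2) (by norm_num) using 2
    module
  calc φ ((1 / 2 : ℝ) • (a + b))
      = ∫ _ in (0 : ℝ)..1, φ ((1 / 2 : ℝ) • (a + b)) := by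
        rw [intervalIntegral.integral_const, sub_zero, one_smul]
    _ ≤ ∫ t in (0 : ℝ)..1, ((1 / 2 : ℝ) • g t + (1 / 2 : ℝ) • g (1 - t)) :=
        intervalIntegral.integral_mono_on' zero_le_one intervalIntegrable_const
          ((hint.smul _).add (hint'.smul _)) hsym
    _ = ∫ t in (0 : ℝ)..1, g t := by
        rw [intervalIntegral.integral_add (f := fun t ↦ (1 / 2 : ℝ) • g t)
            (g := fun t ↦ (1 / 2 : ℝ) • g (1 - t)) (hint.smul _) (hint'.smul _),
          intervalIntegral.integral_smul, intervalIntegral.integral_smul,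
          intervalIntegral.integral_comp_sub_left g 1, sub_self, sub_zero, ← add_smul]
        norm_num

theorem ConvexOn.intervalIntegral_le_average_endpoints (hφ : ConvexOn ℝ s φ) (ha : a ∈ s)
    (hb : b ∈ s)
    (hint : IntervalIntegrable (fun t : ℝ ↦ φ (t • a + (1 - t) • b)) volume 0 1) :
    ∫ t in (0 : ℝ)..1, φ (t • a + (1 - t) • b) ≤ (1 / 2 : ℝ) • (φ a + φ b) := by
  rw [← intervalIntegral.integral_smul_add_one_sub_smul]
  refine intervalIntegral.integral_mono_on' zero_le_one hint
    ((continuous_id.smul continuous_const).add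
      ((continuous_const.sub continuous_id).smul continuous_const) |>.intervalIntegrable 0 1)
    fun t ht ↦ ?_
  exact hφ.2 ha hb ht.1 (sub_nonneg.2 ht.2) (add_sub_cancel _ _)

end HermiteHadamard

theorem IsCompact.exists_Icc_subset_of_ordConnected {s J : Set ℝ} (hs : IsCompact s)
    (hJ : J.OrdConnected) (hsJ : s ⊆ J) : ∃ m M, s ⊆ Icc m M ∧ Icc m M ⊆ J := by
  rcases s.eq_empty_or_nonempty with rfl | hne
  · exact ⟨1, 0, empty_subset _, by simp⟩
  · exact ⟨sInf s, sSup s, subset_Icc_csInf_csSup hs.bddBelow hs.bddAbove,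
      hJ.out (hsJ (hs.sInf_mem hne)) (hsJ (hs.sSup_mem hne))⟩

section CStarAlgebra

variable {A : Type*} [CStarAlgebra A]

theorem exists_spectrum_subset_Icc_subset {J : Set ℝ} (hJ : J.OrdConnected) {a b : A}
    (hsa : spectrum ℝ a ⊆ J) (hsb : spectrum ℝ b ⊆ J) :
    ∃ m M, spectrum ℝ a ⊆ Icc m M ∧ spectrum ℝ b ⊆ Icc m M ∧ Icc m M ⊆ J := by
  obtain ⟨m, M, hsub, hIcc⟩ := ((ContinuousFunctionalCalculus.isCompact_spectrum a).union
    (ContinuousFunctionalCalculus.isCompact_spectrum b)).exists_Icc_subset_of_ordConnected hJ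
    (union_subset hsa hsb)
  exact ⟨m, M, subset_union_left.trans hsub, subset_union_right.trans hsub, hIcc⟩

variable [PartialOrder A] [StarOrderedRing A]

theorem convex_setOf_isSelfAdjoint_spectrum_subset_Icc (m M : ℝ) :
    Convex ℝ {a : A | IsSelfAdjoint a ∧ spectrum ℝ a ⊆ Icc m M} := by
  have hset : {a : A | IsSelfAdjoint a ∧ spectrum ℝ a ⊆ Icc m M} =
      {a : A | IsSelfAdjoint a} ∩ Icc (algebraMap ℝ A m) (algebraMap ℝ A M) := by
    ext a
    simp only [mem_ofPred_eq, mem_inter_iff, mem_Icc]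
    refine and_congr_right fun ha ↦ ?_
    rw [algebraMap_le_iff_le_spectrum ha, le_algebraMap_iff_spectrum_le ha]
    simp only [subset_def, mem_Icc, forall₂_and]
  rw [hset]
  refine Convex.inter (fun a ha b hb s t _ _ _ ↦ ?_) (convex_Icc _ _)
  exact ((IsSelfAdjoint.all s).smul ha).add ((IsSelfAdjoint.all t).smul hb)

theorem convex_setOf_isSelfAdjoint_spectrum_subset {J : Set ℝ} (hJ : J.OrdConnected) :
    Convex ℝ {a : A | IsSelfAdjoint a ∧ spectrum ℝ a ⊆ J} := by
  rintro a ⟨ha, hsa⟩ b ⟨hb, hsb⟩ s t hs ht hst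
  obtain ⟨m, M, hsa', hsb', hIcc⟩ := exists_spectrum_subset_Icc_subset hJ hsa hsb
  have h := convex_setOf_isSelfAdjoint_spectrum_subset_Icc m M ⟨ha, hsa'⟩ ⟨hb, hsb'⟩ hs ht hst
  exact ⟨h.1, h.2.trans hIcc⟩

theorem intervalIntegrable_cfc_smul_add_one_sub_smul {J : Set ℝ} (hJ : J.OrdConnected)
    {f : ℝ → ℝ} (hf : ContinuousOn f J) {a b : A} (ha : IsSelfAdjoint a) (hb : IsSelfAdjoint b)
    (hsa : spectrum ℝ a ⊆ J) (hsb : spectrum ℝ b ⊆ J) :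
    IntervalIntegrable (fun t : ℝ ↦ cfc f (t • a + (1 - t) • b)) volume 0 1 := by
  obtain ⟨m, M, hsa', hsb', hIcc⟩ := exists_spectrum_subset_Icc_subset hJ hsa hsb
  have hseg : ∀ t ∈ uIcc (0 : ℝ) 1,
      IsSelfAdjoint (t • a + (1 - t) • b) ∧ spectrum ℝ (t • a + (1 - t) • b) ⊆ Icc m M := by
    intro t ht
    rw [uIcc_of_le zero_le_one] at ht
    exact convex_setOf_isSelfAdjoint_spectrum_subset_Icc m M ⟨ha, hsa'⟩ ⟨hb, hsb'⟩ ht.1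
      (sub_nonneg.2 ht.2) (add_sub_cancel _ _)
  exact ContinuousOn.intervalIntegrable (ContinuousOn.cfc' isCompact_Icc f (by fun_prop)
    (fun t ht ↦ (hseg t ht).2) (fun t ht ↦ (hseg t ht).1) (hf.mono hIcc))

end CStarAlgebra

/-- Operator Hermite–Hadamard inequality: for bounded self-adjoint operators `A, B`
with spectra in an interval `J` and `f` operator convex (and continuous) on `J`,
`f((A+B)/2) ≤ ∫_0^1 f(tA+(1-t)B) dt ≤ (f(A)+f(B))/2` in the Loewner order. -/
theorem operator_hermite_hadamard
    {H : Type*} [NormedAddCommGroup H] [InnerProductSpace ℂ H] [CompleteSpace H]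
    (A B : H →L[ℂ] H) (hA : IsSelfAdjoint A) (hB : IsSelfAdjoint B)
    (J : Set ℝ) (hJ : J.OrdConnected)
    (hsA : spectrum ℝ A ⊆ J) (hsB : spectrum ℝ B ⊆ J)
    (f : ℝ → ℝ) (hcont : ContinuousOn f J)
    (hopconv : ∀ (X Y : H →L[ℂ] H), IsSelfAdjoint X → IsSelfAdjoint Y →
      spectrum ℝ X ⊆ J → spectrum ℝ Y ⊆ J → ∀ l ∈ Set.Icc (0:ℝ) 1,
        cfc f (l • X + (1 - l) • Y) ≤ l • cfc f X + (1 - l) • cfc f Y) :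
    cfc f ((1/2 : ℝ) • (A + B)) ≤ ∫ t in (0:ℝ)..1, cfc f (t • A + (1 - t) • B) ∧
      (∫ t in (0:ℝ)..1, cfc f (t • A + (1 - t) • B)) ≤
        (1/2 : ℝ) • (cfc f A + cfc f B) := by
  have hconv : ConvexOn ℝ {X : H →L[ℂ] H | IsSelfAdjoint X ∧ spectrum ℝ X ⊆ J} (cfc f) := by
    refine ⟨convex_setOf_isSelfAdjoint_spectrum_subset hJ, ?_⟩
    rintro X ⟨hX, hsX⟩ Y ⟨hY, hsY⟩ l r hl hr hlr
    obtain rfl : r = 1 - l := eq_sub_of_add_eq' hlr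
    exact hopconv X Y hX hY hsX hsY l ⟨hl, sub_nonneg.1 hr⟩
  have hint := intervalIntegrable_cfc_smul_add_one_sub_smul hJ hcont hA hB hsA hsB
  exact ⟨hconv.map_midpoint_le_intervalIntegral ⟨hA, hsA⟩ ⟨hB, hsB⟩ hint,
    hconv.intervalIntegral_le_average_endpoints ⟨hA, hsA⟩ ⟨hB, hsB⟩ hint⟩
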